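/- Suppose Assumptions 1–2 hold: each client loss L_i is μ-strongly convex and L-smooth (equivalently, its gradient g_i satisfies ⟨w−w', g_i(w)−g_i(w')⟩ ≥ μ‖w−w'‖² and ≥ (1/L)‖g_i(w)−g_i(w')‖²), and in every round the per-client model-update estimation error is at most M. Let ŵ_t be FedRecover's recovered global model (using FedAvg aggregation, τ = ∞) and w_t the train-from-scratch model, both updated with learning rate η ≤ min(1/μ, 1/L). Then for all t ≥ 0: ‖ŵ_t − w_t‖ ≤ (sqrt(1−ημ))^t ‖ŵ_0 − w_0‖ + ηM · (1 − (sqrt(1−ημ))^t)/(1 − sqrt(1−ημ)). -/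

import Mathlib

open scoped RealInnerProductSpace

/-!
A gradient step `x ↦ x - η • g x` with a strongly monotone, cocoercive `g` contracts distances
by `√(1 - η μ)` once `η ≤ 1 / L`. FedAvg averages the clients' steps with convex weights, so the
averaged step contracts by the same factor, while the estimation errors add at most `η M` per
round. Unrolling `d (t + 1) ≤ q d t + η M` gives the geometric bound.
-/

section GradientStep

variable {E : Type*} [NormedAddCommGroup E] [InnerProductSpace ℝ E]

theorem norm_sub_smul_sq_le {a b : E} {μ η : ℝ} (hη : 0 ≤ η)
    (hmono : μ * ‖a‖ ^ 2 ≤ ⟪a, b⟫) (hcoco : η * ‖b‖ ^ 2 ≤ ⟪a, b⟫) :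
    ‖a - η • b‖ ^ 2 ≤ (1 - η * μ) * ‖a‖ ^ 2 := by
  have expand : ‖a - η • b‖ ^ 2 = ‖a‖ ^ 2 - 2 * η * ⟪a, b⟫ + η * (η * ‖b‖ ^ 2) := by
    rw [norm_sub_sq_real, real_inner_smul_right, norm_smul, Real.norm_eq_abs, mul_pow, sq_abs]
    ring
  rw [expand]
  nlinarith [mul_le_mul_of_nonneg_left hcoco hη, mul_le_mul_of_nonneg_left hmono hη]

theorem norm_sub_smul_le_sqrt_mul {a b : E} {μ η : ℝ} (hη : 0 ≤ η)
    (hmono : μ * ‖a‖ ^ 2 ≤ ⟪a, b⟫) (hcoco : η * ‖b‖ ^ 2 ≤ ⟪a, b⟫) :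
    ‖a - η • b‖ ≤ √(1 - η * μ) * ‖a‖ := by
  calc ‖a - η • b‖ = √(‖a - η • b‖ ^ 2) := (Real.sqrt_sq (norm_nonneg _)).symm
    _ ≤ √((1 - η * μ) * ‖a‖ ^ 2) := Real.sqrt_le_sqrt (norm_sub_smul_sq_le hη hmono hcoco)
    _ = √(1 - η * μ) * ‖a‖ := by rw [Real.sqrt_mul' _ (sq_nonneg _), Real.sqrt_sq (norm_nonneg _)]

end GradientStep

section Averaging

variable {ι E : Type*} [SeminormedAddCommGroup E] [NormedSpace ℝ E]

theorem norm_sum_smul_le_of_convex_weights {s : Finset ι} {lam : ι → ℝ} {v : ι → E} {C : ℝ}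
    (hlam : ∀ i ∈ s, 0 ≤ lam i) (hsum : ∑ i ∈ s, lam i = 1) (hv : ∀ i ∈ s, ‖v i‖ ≤ C) :
    ‖∑ i ∈ s, lam i • v i‖ ≤ C := by
  simpa only [mem_closedBall_zero_iff] using
    (convex_closedBall (0 : E) C).sum_mem hlam hsum fun i hi ↦ mem_closedBall_zero_iff.2 (hv i hi)

theorem sub_smul_sum_sub_sub_smul_sum {s : Finset ι} {lam : ι → ℝ} (hsum : ∑ i ∈ s, lam i = 1)
    (η : ℝ) (x y : E) (u v : ι → E) :
    (x - η • ∑ i ∈ s, lam i • u i) - (y - η • ∑ i ∈ s, lam i • v i)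
      = ∑ i ∈ s, lam i • ((x - η • u i) - (y - η • v i)) := by
  simp only [smul_sub, Finset.sum_sub_distrib, ← Finset.sum_smul, hsum, one_smul, Finset.smul_sum,
    smul_comm η]

end Averaging

theorem le_pow_mul_add_geom_of_le_mul_add {d : ℕ → ℝ} {q c : ℝ} (hq : 0 ≤ q) (hq1 : q ≠ 1)
    (hd : ∀ t, d (t + 1) ≤ q * d t + c) (t : ℕ) :
    d t ≤ q ^ t * d 0 + c * (1 - q ^ t) / (1 - q) := by
  induction t with
  | zero => simp
  | succ t ih =>
    have hq1' : 1 - q ≠ 0 := sub_ne_zero.2 hq1.symm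
    calc d (t + 1) ≤ q * d t + c := hd t
      _ ≤ q * (q ^ t * d 0 + c * (1 - q ^ t) / (1 - q)) + c := by gcongr
      _ = q ^ (t + 1) * d 0 + c * (1 - q ^ (t + 1)) / (1 - q) := by field_simp; ring

theorem stmt_9_general (d k : ℕ) (g : Fin k → EuclideanSpace ℝ (Fin d) → EuclideanSpace ℝ (Fin d))
    (lam : Fin k → ℝ) (μ L η M : ℝ)
    (wh w : ℕ → EuclideanSpace ℝ (Fin d))
    (hμ : 0 < μ)
    (hmono : ∀ i x y, ⟪x - y, g i x - g i y⟫ ≥ μ * ‖x - y‖ ^ 2)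
    (hcoco : ∀ i x y, ⟪x - y, g i x - g i y⟫ ≥ (1 / L) * ‖g i x - g i y‖ ^ 2)
    (hlam : ∀ i, 0 ≤ lam i) (hsum : ∑ i, lam i = 1)
    (hη0 : 0 < η) (hη : η ≤ min (1 / μ) (1 / L))
    -- FedRecover's update: exact rounds correspond to zero estimation error,
    -- estimated rounds have per-client error at most M
    (hrec : ∀ t, ∃ e : Fin k → EuclideanSpace ℝ (Fin d),
      (∀ i, ‖e i‖ ≤ M) ∧ wh (t + 1) = wh t - η • ∑ i, lam i • (g i (wh t) + e i))
    -- train-from-scratch update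
    (hscr : ∀ t, w (t + 1) = w t - η • ∑ i, lam i • g i (w t)) :
    ∀ t, ‖wh t - w t‖ ≤ (Real.sqrt (1 - η * μ)) ^ t * ‖wh 0 - w 0‖
      + η * M * (1 - (Real.sqrt (1 - η * μ)) ^ t) / (1 - Real.sqrt (1 - η * μ)) := by
  set q := √(1 - η * μ)
  have hq1 : q ≠ 1 := by
    rw [Ne, Real.sqrt_eq_one]
    nlinarith [mul_pos hη0 hμ]
  have contraction : ∀ i x y, ‖(x - η • g i x) - (y - η • g i y)‖ ≤ q * ‖x - y‖ := by
    intro i x y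
    have hcoco' : η * ‖g i x - g i y‖ ^ 2 ≤ ⟪x - y, g i x - g i y⟫ :=
      (mul_le_mul_of_nonneg_right (hη.trans (min_le_right _ _)) (sq_nonneg _)).trans (hcoco i x y)
    rw [sub_sub_sub_comm, ← smul_sub]
    exact norm_sub_smul_le_sqrt_mul hη0.le (hmono i x y) hcoco'
  have step : ∀ t, ‖wh (t + 1) - w (t + 1)‖ ≤ q * ‖wh t - w t‖ + η * M := by
    intro t
    obtain ⟨e, he, hwh⟩ := hrec t
    rw [hwh, hscr t, sub_smul_sum_sub_sub_smul_sum hsum]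
    refine norm_sum_smul_le_of_convex_weights (fun i _ ↦ hlam i) hsum fun i _ ↦ ?_
    calc ‖(wh t - η • (g i (wh t) + e i)) - (w t - η • g i (w t))‖
        = ‖((wh t - η • g i (wh t)) - (w t - η • g i (w t))) - η • e i‖ := by
          rw [smul_add]; abel_nf
      _ ≤ q * ‖wh t - w t‖ + η * M := by
          grw [norm_sub_le, contraction, norm_smul, Real.norm_of_nonneg hη0.le, he]
  exact le_pow_mul_add_geom_of_le_mul_add (Real.sqrt_nonneg _) hq1 step

/-- Theorem 1 of FedRecover: in every round, FedRecover updates the recovered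
global model with FedAvg-aggregated (possibly estimated) model updates whose
per-client estimation error is at most `M`, while train-from-scratch uses exact
updates. The model difference is bounded in every round. -/
theorem stmt_9 (d k : ℕ) (g : Fin k → EuclideanSpace ℝ (Fin d) → EuclideanSpace ℝ (Fin d))
    (lam : Fin k → ℝ) (μ L η M : ℝ)
    (wh w : ℕ → EuclideanSpace ℝ (Fin d))
    (hμ : 0 < μ) (hL : 0 < L)
    (hmono : ∀ i x y, ⟪x - y, g i x - g i y⟫ ≥ μ * ‖x - y‖ ^ 2)
    (hcoco : ∀ i x y, ⟪x - y, g i x - g i y⟫ ≥ (1 / L) * ‖g i x - g i y‖ ^ 2)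
    (hlam : ∀ i, 0 ≤ lam i) (hsum : ∑ i, lam i = 1)
    (hη0 : 0 < η) (hη : η ≤ min (1 / μ) (1 / L)) (hημ : η * μ < 1)
    -- FedRecover's update: exact rounds correspond to zero estimation error,
    -- estimated rounds have per-client error at most M
    (hrec : ∀ t, ∃ e : Fin k → EuclideanSpace ℝ (Fin d),
      (∀ i, ‖e i‖ ≤ M) ∧ wh (t + 1) = wh t - η • ∑ i, lam i • (g i (wh t) + e i))
    -- train-from-scratch update
    (hscr : ∀ t, w (t + 1) = w t - η • ∑ i, lam i • g i (w t)) :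
    ∀ t, ‖wh t - w t‖ ≤ (Real.sqrt (1 - η * μ)) ^ t * ‖wh 0 - w 0‖
      + η * M * (1 - (Real.sqrt (1 - η * μ)) ^ t) / (1 - Real.sqrt (1 - η * μ)) :=
  stmt_9_general d k g lam μ L η M wh w hμ hmono hcoco hlam hsum hη0 hη hrec hscr
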